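/- arXiv:2010.00171 — 7 statements merged into one kernel-verified Lean document; each statement's English description precedes it below -/
import Mathlib

section
/- Let (a_k)_{k≥1} be real numbers with a_1 > 0 and a_k ≥ 0 for all k ≥ 2, such that F(u) = Σ_{k=1}^∞ a_k u^k converges for all u ∈ [0,R), R > 0. Put N(u) = e^{F(u)} = Σ_{n=0}^∞ b_n u^n (so b_n ≥ 0), and for 0 < u < R define the deformed Poisson distribution P_n(u) = b_n u^n / N(u). Then for every u ∈ (0,R): Σ_n n² P_n(u) − (Σ_n n P_n(u))² − Σ_n n P_n(u) = Σ_{k≥2} k(k−1) a_k u^k = u² F''(u) ≥ 0. Hence the variance of P(u) is at least its mean, i.e. the associated nonlinear coherent states are super-Poissonian (Mandel parameter Q_M(u) = u F''(u)/F'(u) ≥ 0). -/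
/-!
Write `F(u) = Σ aₖ uᵏ` and `N(u) = Σ bₙ uⁿ`. Differentiating `N = exp ∘ F` on `(0, R)` and
multiplying by `u` gives `Σ n bₙ uⁿ = (Σ k aₖ uᵏ) N(u)`; differentiating this identity once more
gives `Σ n² bₙ uⁿ = (Σ k² aₖ uᵏ) N(u) + (Σ k aₖ uᵏ)(Σ n bₙ uⁿ)`. After division by `N(u)` the mean
is `m = Σ k aₖ uᵏ` and the second moment is `Σ k² aₖ uᵏ + m²`, so variance minus mean is
`Σ k(k-1) aₖ uᵏ ≥ 0`.

Comparing coefficients in the first identity (two power series agreeing on `(0, R)` coincide, by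
the isolated zeros of analytic functions) gives `n bₙ = Σ_{k+j=n} k aₖ bⱼ`; since `b₀ = e^{a₀} > 0`
and `aₖ ≥ 0` for `k ≥ 1`, induction gives `bₙ ≥ 0`.
-/

open Filter Set Finset Topology

section PowerSeries

variable {c : ℕ → ℝ} {R : ℝ}

theorem summable_norm_pow_mul_mul_pow (hc : ∀ u ∈ Ico 0 R, Summable fun n => c n * u ^ n)
    (p : ℕ) {x : ℝ} (hx : |x| < R) : Summable fun n : ℕ => ‖(n : ℝ) ^ p * c n * x ^ n‖ := by
  obtain ⟨ρ, hxρ, hρR⟩ := exists_between hx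
  have hρ : 0 < ρ := (abs_nonneg x).trans_lt hxρ
  obtain ⟨C, hC⟩ := ((hc ρ ⟨hρ.le, hρR⟩).tendsto_atTop_zero.norm).bddAbove_range
  have hgeom : Summable fun n : ℕ => C * ((n : ℝ) ^ p * (|x| / ρ) ^ n) :=
    (summable_pow_mul_geometric_of_norm_lt_one p (by
      rwa [Real.norm_eq_abs, abs_div, abs_abs, abs_of_pos hρ, div_lt_one hρ])).mul_left C
  refine hgeom.of_nonneg_of_le (fun n => norm_nonneg _) fun n => ?_
  have hn : ‖(n : ℝ) ^ p * c n * x ^ n‖ = (n : ℝ) ^ p * (‖c n * ρ ^ n‖ * (|x| / ρ) ^ n) := by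
    simp only [norm_mul, norm_pow, Real.norm_eq_abs, Nat.abs_cast, abs_of_pos hρ, div_pow]
    field_simp
  rw [hn, mul_left_comm]
  gcongr
  exact hC ⟨n, rfl⟩

theorem summable_natCast_mul_mul_pow (hc : ∀ u ∈ Ico 0 R, Summable fun n => c n * u ^ n) :
    ∀ u ∈ Ico 0 R, Summable fun n : ℕ => n * c n * u ^ n := fun u hu =>
  (summable_norm_pow_mul_mul_pow hc 1 (by rw [abs_of_nonneg hu.1]; exact hu.2)).of_norm.congr
    fun n => by rw [pow_one]

-- `x ^ (n - 1)` is junk at `n = 0`, where the factor `n` kills it.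
theorem hasDerivAt_tsum_mul_pow (hc : ∀ u ∈ Ico 0 R, Summable fun n => c n * u ^ n) {x : ℝ}
    (hx : |x| < R) :
    HasDerivAt (fun y => ∑' n, c n * y ^ n) (∑' n : ℕ, n * c n * x ^ (n - 1)) x := by
  obtain ⟨r, hxr, hrR⟩ := exists_between hx
  have hr : 0 < r := (abs_nonneg x).trans_lt hxr
  have hbound : Summable fun n : ℕ => ‖(n : ℝ) * c n * r ^ n‖ / r :=
    ((summable_norm_pow_mul_mul_pow hc 1 (by rwa [abs_of_pos hr])).div_const r).congr
      fun n => by rw [pow_one]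
  have hderiv := hasDerivAt_tsum_of_isPreconnected hbound isOpen_Ioo
    (convex_Ioo (-r) r).isPreconnected (fun n y _ => (hasDerivAt_pow n y).const_mul (c n))
    (fun n y hy => ?_) (show (0 : ℝ) ∈ Ioo (-r) r by simpa using hr)
    (by simpa using hc 0 ⟨le_rfl, hr.trans hrR⟩) (abs_lt.mp hxr)
  · exact hderiv.congr_deriv (tsum_congr fun n => by ring)
  · rcases n with _ | n
    · simp
    have hy' : |y| ^ n ≤ r ^ n := pow_le_pow_left₀ (abs_nonneg y) (abs_lt.mpr hy).le n
    rw [le_div_iff₀ hr, Nat.add_sub_cancel]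
    simp only [norm_mul, norm_pow, Real.norm_eq_abs, Nat.abs_cast, abs_of_pos hr, pow_succ]
    have : 0 ≤ ((n + 1 : ℕ) : ℝ) * |c (n + 1)| := by positivity
    nlinarith [mul_le_mul_of_nonneg_left hy' this]

theorem mul_tsum_natCast_mul_mul_pow_sub_one (c : ℕ → ℝ) (x : ℝ) :
    x * ∑' n : ℕ, n * c n * x ^ (n - 1) = ∑' n : ℕ, n * c n * x ^ n := by
  rw [← tsum_mul_left]
  congr 1 with (_ | n)
  · simp
  · rw [Nat.add_sub_cancel, pow_succ]
    ring

theorem eq_zero_of_tsum_mul_pow_eq_zero {r : ℝ} (hr : 0 < r)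
    (hc : Summable fun n => c n * r ^ n) (h : ∀ u ∈ Ioo 0 r, ∑' n, c n * u ^ n = 0) :
    c = 0 := by
  set p := FormalMultilinearSeries.ofScalars ℝ c
  have hrad : (r.toNNReal : ENNReal) ≤ p.radius :=
    p.le_radius_of_tendsto (l := 0) <| by
      simpa [p, FormalMultilinearSeries.ofScalars_norm, hr.le, abs_of_pos hr] using
        hc.tendsto_atTop_zero.norm
  have hp := p.hasFPowerSeriesOnBall
    ((ENNReal.coe_pos.mpr (Real.toNNReal_pos.mpr hr)).trans_le hrad)
  have hsum : ∀ u ∈ Ioo 0 r, p.sum u = 0 := fun u hu => by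
    simpa [p, FormalMultilinearSeries.sum, FormalMultilinearSeries.ofScalars_apply_eq, mul_comm]
      using h u hu
  have hfreq : ∃ᶠ z in 𝓝[≠] (0 : ℝ), p.sum z = 0 :=
    ((eventually_of_mem (Ioo_mem_nhdsGT hr) hsum).frequently).filter_mono
      (nhdsWithin_mono _ fun _ hz => ne_of_gt hz)
  rw [← FormalMultilinearSeries.ofScalars_series_eq_zero (E := ℝ)]
  exact hp.hasFPowerSeriesAt.locally_zero_iff.mp
    (hp.analyticAt.frequently_zero_iff_eventually_zero.mp hfreq)

theorem eq_of_tsum_mul_pow_eq {d : ℕ → ℝ} (hR : 0 < R)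
    (hc : ∀ u ∈ Ico 0 R, Summable fun n => c n * u ^ n)
    (hd : ∀ u ∈ Ico 0 R, Summable fun n => d n * u ^ n)
    (h : ∀ u ∈ Ioo 0 R, ∑' n, c n * u ^ n = ∑' n, d n * u ^ n) : c = d := by
  have hsub : ∀ u ∈ Ico 0 R, HasSum (fun n => (c - d) n * u ^ n)
      (∑' n, c n * u ^ n - ∑' n, d n * u ^ n) := fun u hu => by
    simpa only [Pi.sub_apply, sub_mul] using ((hc u hu).hasSum.sub (hd u hu).hasSum)
  refine sub_eq_zero.mp (eq_zero_of_tsum_mul_pow_eq_zero (half_pos hR)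
    (hsub _ ⟨by positivity, by linarith⟩).summable fun u hu => ?_)
  rw [(hsub u ⟨hu.1.le, by linarith [hu.2]⟩).tsum_eq, h u ⟨hu.1, by linarith [hu.2]⟩, sub_self]

theorem hasSum_sum_antidiagonal_mul_pow {A : Type*} [NormedCommRing A] [CompleteSpace A]
    {f g : ℕ → A} {x : A}
    (hf : Summable fun n => ‖f n * x ^ n‖) (hg : Summable fun n => ‖g n * x ^ n‖) :
    HasSum (fun n => (∑ p ∈ antidiagonal n, f p.1 * g p.2) * x ^ n)
      ((∑' n, f n * x ^ n) * ∑' n, g n * x ^ n) := by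
  have hterm : ∀ n, ∑ p ∈ antidiagonal n, f p.1 * x ^ p.1 * (g p.2 * x ^ p.2)
      = (∑ p ∈ antidiagonal n, f p.1 * g p.2) * x ^ n := fun n => by
    rw [Finset.sum_mul]
    refine Finset.sum_congr rfl fun p hp => ?_
    rw [← mem_antidiagonal.mp hp, pow_add]
    ring
  rw [tsum_mul_tsum_eq_tsum_sum_antidiagonal_of_summable_norm hf hg]
  simp only [hterm]
  exact ((summable_norm_sum_mul_antidiagonal_of_summable_norm hf hg).of_norm.congr hterm).hasSum

theorem tsum_natCast_mul_sub_one_mul_mul_pow_eq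
    (hc : ∀ u ∈ Ico 0 R, Summable fun n => c n * u ^ n) {u : ℝ} (hu : u ∈ Ico 0 R) :
    ∑' n : ℕ, (n : ℝ) * ((n : ℝ) - 1) * c n * u ^ n
      = ∑' n : ℕ, (n : ℝ) ^ 2 * c n * u ^ n - ∑' n : ℕ, n * c n * u ^ n := by
  have hu' : |u| < R := by rw [abs_of_nonneg hu.1]; exact hu.2
  rw [← Summable.tsum_sub (summable_norm_pow_mul_mul_pow hc 2 hu').of_norm
    (summable_natCast_mul_mul_pow hc u hu)]
  exact tsum_congr fun n => by ring

theorem tsum_natCast_mul_sub_one_mul_mul_pow_nonneg (hc : ∀ n, 1 ≤ n → 0 ≤ c n) {u : ℝ}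
    (hu : 0 ≤ u) : 0 ≤ ∑' n : ℕ, (n : ℝ) * ((n : ℝ) - 1) * c n * u ^ n := by
  refine tsum_nonneg fun n => ?_
  rcases Nat.eq_zero_or_pos n with rfl | hn
  · simp
  have : (1 : ℝ) ≤ n := by exact_mod_cast hn
  exact mul_nonneg (mul_nonneg (by nlinarith) (hc n hn)) (pow_nonneg hu n)

end PowerSeries

theorem nonneg_of_natCast_mul_eq_sum_antidiagonal {a b : ℕ → ℝ} (ha : ∀ k, 1 ≤ k → 0 ≤ a k)
    (hb₀ : 0 ≤ b 0) (hrec : ∀ n, n * b n = ∑ p ∈ antidiagonal n, p.1 * a p.1 * b p.2) :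
    ∀ n, 0 ≤ b n := by
  intro n
  induction n using Nat.strong_induction_on with
  | _ n ih =>
    rcases n with _ | n
    · exact hb₀
    refine nonneg_of_mul_nonneg_right ((hrec _).symm ▸ sum_nonneg fun p hp => ?_)
      (by positivity : (0 : ℝ) < (n + 1 : ℕ))
    rcases Nat.eq_zero_or_pos p.1 with h0 | hpos
    · simp [h0]
    have hp2 : p.2 < n + 1 := by have := mem_antidiagonal.mp hp; omega
    exact mul_nonneg (mul_nonneg (Nat.cast_nonneg _) (ha _ hpos)) (ih _ hp2)

section DeformedExponential

variable {R : ℝ} {a b : ℕ → ℝ}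

theorem tsum_natCast_mul_mul_pow_eq_of_eq_exp
    (haconv : ∀ u ∈ Ico 0 R, Summable fun k => a k * u ^ k)
    (hbconv : ∀ u ∈ Ico 0 R, Summable fun n => b n * u ^ n)
    (hN : ∀ u ∈ Ioo 0 R, ∑' n, b n * u ^ n = Real.exp (∑' k, a k * u ^ k))
    {u : ℝ} (hu : u ∈ Ioo 0 R) :
    ∑' n : ℕ, n * b n * u ^ n = (∑' k : ℕ, k * a k * u ^ k) * ∑' n, b n * u ^ n := by
  have hu' : |u| < R := by rw [abs_of_pos hu.1]; exact hu.2
  have hexp : (fun y => ∑' n, b n * y ^ n) =ᶠ[𝓝 u] fun y => Real.exp (∑' k, a k * y ^ k) :=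
    eventually_of_mem (Ioo_mem_nhds hu.1 hu.2) hN
  have hderiv := (hasDerivAt_tsum_mul_pow hbconv hu').unique
    (((hasDerivAt_tsum_mul_pow haconv hu').exp).congr_of_eventuallyEq hexp)
  rw [← mul_tsum_natCast_mul_mul_pow_sub_one, ← mul_tsum_natCast_mul_mul_pow_sub_one, hderiv,
    hN u hu]
  ring

theorem tsum_natCast_sq_mul_mul_pow_eq_of_eq_exp
    (haconv : ∀ u ∈ Ico 0 R, Summable fun k => a k * u ^ k)
    (hbconv : ∀ u ∈ Ico 0 R, Summable fun n => b n * u ^ n)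
    (hN : ∀ u ∈ Ioo 0 R, ∑' n, b n * u ^ n = Real.exp (∑' k, a k * u ^ k))
    {u : ℝ} (hu : u ∈ Ioo 0 R) :
    ∑' n : ℕ, (n : ℝ) ^ 2 * b n * u ^ n
      = (∑' k : ℕ, (k : ℝ) ^ 2 * a k * u ^ k) * ∑' n, b n * u ^ n
        + (∑' k : ℕ, k * a k * u ^ k) * ∑' n : ℕ, n * b n * u ^ n := by
  have hu' : |u| < R := by rw [abs_of_pos hu.1]; exact hu.2
  have hmean : (fun y => ∑' n : ℕ, n * b n * y ^ n) =ᶠ[𝓝 u]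
      fun y => (∑' k : ℕ, k * a k * y ^ k) * ∑' n, b n * y ^ n :=
    eventually_of_mem (Ioo_mem_nhds hu.1 hu.2)
      fun y hy => tsum_natCast_mul_mul_pow_eq_of_eq_exp haconv hbconv hN hy
  have hderiv := (hasDerivAt_tsum_mul_pow (summable_natCast_mul_mul_pow hbconv) hu').unique
    (((hasDerivAt_tsum_mul_pow (summable_natCast_mul_mul_pow haconv) hu').mul
      (hasDerivAt_tsum_mul_pow hbconv hu')).congr_of_eventuallyEq hmean)
  have hsq : ∀ c : ℕ → ℝ,
      ∑' n : ℕ, (n : ℝ) ^ 2 * c n * u ^ n = ∑' n : ℕ, n * (n * c n) * u ^ n :=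
    fun c => tsum_congr fun n => by ring
  calc ∑' n : ℕ, (n : ℝ) ^ 2 * b n * u ^ n = u * ∑' n : ℕ, n * (n * b n) * u ^ (n - 1) := by
        rw [hsq, mul_tsum_natCast_mul_mul_pow_sub_one]
    _ = (u * ∑' k : ℕ, k * (k * a k) * u ^ (k - 1)) * ∑' n, b n * u ^ n
          + (∑' k : ℕ, k * a k * u ^ k) * (u * ∑' n : ℕ, n * b n * u ^ (n - 1)) := by
        rw [hderiv]; ring
    _ = _ := by
        rw [mul_tsum_natCast_mul_mul_pow_sub_one, mul_tsum_natCast_mul_mul_pow_sub_one, hsq]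

theorem natCast_mul_eq_sum_antidiagonal_of_eq_exp (hR : 0 < R)
    (haconv : ∀ u ∈ Ico 0 R, Summable fun k => a k * u ^ k)
    (hbconv : ∀ u ∈ Ico 0 R, Summable fun n => b n * u ^ n)
    (hN : ∀ u ∈ Ioo 0 R, ∑' n, b n * u ^ n = Real.exp (∑' k, a k * u ^ k)) (n : ℕ) :
    n * b n = ∑ p ∈ antidiagonal n, p.1 * a p.1 * b p.2 := by
  have hprod : ∀ u ∈ Ico 0 R,
      HasSum (fun n : ℕ => (∑ p ∈ antidiagonal n, p.1 * a p.1 * b p.2) * u ^ n)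
        ((∑' k : ℕ, k * a k * u ^ k) * ∑' n, b n * u ^ n) := fun u hu => by
    have hu' : |u| < R := by rw [abs_of_nonneg hu.1]; exact hu.2
    have ha' : Summable fun k : ℕ => ‖k * a k * u ^ k‖ := by
      simpa only [pow_one] using summable_norm_pow_mul_mul_pow haconv 1 hu'
    have hb' : Summable fun n => ‖b n * u ^ n‖ := by
      simpa only [pow_zero, one_mul] using summable_norm_pow_mul_mul_pow hbconv 0 hu'
    exact hasSum_sum_antidiagonal_mul_pow (f := fun k : ℕ => (k : ℝ) * a k) ha' hb'
  refine congrFun (eq_of_tsum_mul_pow_eq hR (summable_natCast_mul_mul_pow hbconv)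
    (fun u hu => (hprod u hu).summable) fun u hu => ?_) n
  rw [tsum_natCast_mul_mul_pow_eq_of_eq_exp haconv hbconv hN hu, (hprod u ⟨hu.1.le, hu.2⟩).tsum_eq]

theorem nonneg_of_eq_exp (hR : 0 < R) (ha : ∀ k, 1 ≤ k → 0 ≤ a k)
    (haconv : ∀ u ∈ Ico 0 R, Summable fun k => a k * u ^ k)
    (hbconv : ∀ u ∈ Ico 0 R, Summable fun n => b n * u ^ n)
    (hN : ∀ u ∈ Ico 0 R, ∑' n, b n * u ^ n = Real.exp (∑' k, a k * u ^ k)) (n : ℕ) :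
    0 ≤ b n := by
  have hb₀ : 0 ≤ b 0 := by
    have hN₀ : ∑' n, b n * (0 : ℝ) ^ n = b 0 :=
      (tsum_eq_single 0 fun n hn => by simp [hn]).trans (by simp)
    rw [← hN₀, hN 0 ⟨le_rfl, hR⟩]
    positivity
  exact nonneg_of_natCast_mul_eq_sum_antidiagonal ha hb₀
    (natCast_mul_eq_sum_antidiagonal_of_eq_exp hR haconv hbconv
      fun u hu => hN u ⟨hu.1.le, hu.2⟩) n

end DeformedExponential

theorem deformed_exponential_superPoissonian_general
    (R : ℝ) (hR : 0 < R) (a b : ℕ → ℝ)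
    (ha1 : 0 < a 1) (hak : ∀ k, 2 ≤ k → 0 ≤ a k)
    (haconv : ∀ u ∈ Set.Ico (0:ℝ) R, Summable (fun k : ℕ => a k * u ^ k))
    (hbconv : ∀ u ∈ Set.Ico (0:ℝ) R, Summable (fun n : ℕ => b n * u ^ n))
    (hN : ∀ u ∈ Set.Ico (0:ℝ) R,
      ∑' n : ℕ, b n * u ^ n = Real.exp (∑' k : ℕ, a k * u ^ k)) :
    (∀ n, 0 ≤ b n) ∧
    ∀ u ∈ Set.Ioo (0:ℝ) R,
      (∑' n : ℕ, (n : ℝ) ^ 2 *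
          (b n * u ^ n / Real.exp (∑' k : ℕ, a k * u ^ k)))
        - (∑' n : ℕ, (n : ℝ) *
            (b n * u ^ n / Real.exp (∑' k : ℕ, a k * u ^ k))) ^ 2
        - (∑' n : ℕ, (n : ℝ) *
            (b n * u ^ n / Real.exp (∑' k : ℕ, a k * u ^ k)))
        = ∑' k : ℕ, (k : ℝ) * ((k : ℝ) - 1) * a k * u ^ k ∧
      0 ≤ ∑' k : ℕ, (k : ℝ) * ((k : ℝ) - 1) * a k * u ^ k ∧
      (∑' n : ℕ, (n : ℝ) *
          (b n * u ^ n / Real.exp (∑' k : ℕ, a k * u ^ k)))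
        ≤ (∑' n : ℕ, (n : ℝ) ^ 2 *
            (b n * u ^ n / Real.exp (∑' k : ℕ, a k * u ^ k)))
          - (∑' n : ℕ, (n : ℝ) *
              (b n * u ^ n / Real.exp (∑' k : ℕ, a k * u ^ k))) ^ 2 := by
  have ha : ∀ k, 1 ≤ k → 0 ≤ a k := fun k hk =>
    hk.eq_or_lt.elim (fun h => h ▸ ha1.le) fun h => hak k h
  have hN' : ∀ u ∈ Ioo 0 R, ∑' n, b n * u ^ n = Real.exp (∑' k, a k * u ^ k) :=
    fun u hu => hN u ⟨hu.1.le, hu.2⟩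
  refine ⟨nonneg_of_eq_exp hR ha haconv hbconv hN, fun u hu => ?_⟩
  set E := Real.exp (∑' k : ℕ, a k * u ^ k)
  have hE : ∑' n, b n * u ^ n = E := hN' u hu
  have hE0 : E ≠ 0 := (Real.exp_pos _).ne'
  have hmoment : ∀ c : ℕ → ℝ,
      ∑' n : ℕ, c n * (b n * u ^ n / E) = (∑' n, c n * b n * u ^ n) / E :=
    fun c => by rw [← tsum_div_const]; exact tsum_congr fun n => by ring
  have hmean : ∑' n : ℕ, n * (b n * u ^ n / E) = ∑' k : ℕ, k * a k * u ^ k := by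
    rw [hmoment, tsum_natCast_mul_mul_pow_eq_of_eq_exp haconv hbconv hN' hu, hE]
    field_simp
  have hsecond : ∑' n : ℕ, (n : ℝ) ^ 2 * (b n * u ^ n / E)
      = ∑' k : ℕ, (k : ℝ) ^ 2 * a k * u ^ k + (∑' k : ℕ, k * a k * u ^ k) ^ 2 := by
    rw [hmoment, tsum_natCast_sq_mul_mul_pow_eq_of_eq_exp haconv hbconv hN' hu,
      tsum_natCast_mul_mul_pow_eq_of_eq_exp haconv hbconv hN' hu, hE]
    field_simp
  have hfactorial := tsum_natCast_mul_sub_one_mul_mul_pow_eq haconv ⟨hu.1.le, hu.2⟩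
  have hnonneg := tsum_natCast_mul_sub_one_mul_mul_pow_nonneg ha hu.1.le
  rw [hfactorial] at hnonneg
  rw [hsecond, hmean, hfactorial]
  exact ⟨by ring, hnonneg, by linarith⟩

/-- Let `F(u) = Σ_{k≥1} a_k u^k` with `a_1 > 0`, `a_k ≥ 0` for `k ≥ 2`,
converging on `[0,R)`, and let `N(u) = e^{F(u)} = Σ_n b_n u^n`.  Then all
`b_n ≥ 0`, and for the deformed Poisson distribution
`P_n(u) = b_n u^n / N(u)` one has, for every `u ∈ (0,R)`,
`Σ n² P_n − (Σ n P_n)² − Σ n P_n = Σ_{k≥2} k(k−1) a_k u^k ≥ 0`;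
hence the variance is at least the mean (the states are super-Poissonian). -/
theorem deformed_exponential_superPoissonian
    (R : ℝ) (hR : 0 < R) (a b : ℕ → ℝ)
    (ha0 : a 0 = 0) (ha1 : 0 < a 1) (hak : ∀ k, 2 ≤ k → 0 ≤ a k)
    (haconv : ∀ u ∈ Set.Ico (0:ℝ) R, Summable (fun k : ℕ => a k * u ^ k))
    (hbconv : ∀ u ∈ Set.Ico (0:ℝ) R, Summable (fun n : ℕ => b n * u ^ n))
    (hN : ∀ u ∈ Set.Ico (0:ℝ) R,
      ∑' n : ℕ, b n * u ^ n = Real.exp (∑' k : ℕ, a k * u ^ k)) :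
    (∀ n, 0 ≤ b n) ∧
    ∀ u ∈ Set.Ioo (0:ℝ) R,
      (∑' n : ℕ, (n : ℝ) ^ 2 *
          (b n * u ^ n / Real.exp (∑' k : ℕ, a k * u ^ k)))
        - (∑' n : ℕ, (n : ℝ) *
            (b n * u ^ n / Real.exp (∑' k : ℕ, a k * u ^ k))) ^ 2
        - (∑' n : ℕ, (n : ℝ) *
            (b n * u ^ n / Real.exp (∑' k : ℕ, a k * u ^ k)))
        = ∑' k : ℕ, (k : ℝ) * ((k : ℝ) - 1) * a k * u ^ k ∧
      0 ≤ ∑' k : ℕ, (k : ℝ) * ((k : ℝ) - 1) * a k * u ^ k ∧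
      (∑' n : ℕ, (n : ℝ) *
          (b n * u ^ n / Real.exp (∑' k : ℕ, a k * u ^ k)))
        ≤ (∑' n : ℕ, (n : ℝ) ^ 2 *
            (b n * u ^ n / Real.exp (∑' k : ℕ, a k * u ^ k)))
          - (∑' n : ℕ, (n : ℝ) *
              (b n * u ^ n / Real.exp (∑' k : ℕ, a k * u ^ k))) ^ 2 :=
  deformed_exponential_superPoissonian_general R hR a b ha1 hak haconv hbconv hN
end

section
/- Let (a_k)_{k≥1} be real numbers with a_1 > 0 and a_k ≥ 0 for all k ≥ 2, and suppose F(u) = Σ_{k=1}^∞ a_k u^k converges for u ∈ [0,R), R > 0. Then for every u ∈ (0,R): F(u) ≤ u F'(u), equivalently 1/N(u) ≥ e^{-u N'(u)/N(u)} where N = e^F. In terms of the mean photon number n̄(u) = u F'(u), the vacuum overlap of the associated nonlinear coherent state satisfies |h_0(u(n̄))|² = e^{-F(u)} ≥ e^{-n̄}; hence no nonlinear coherent state with N ∈ Σ₊ can have a Helstrom bound below that of the Glauber–Sudarshan coherent states. -/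
/-- Let `F(u) = Σ_{k≥1} a_k u^k` with `a_1 > 0` and `a_k ≥ 0` for `k ≥ 2`,
converging on `[0,R)`.  Then for every `u ∈ (0,R)` one has
`F(u) ≤ u F'(u) = Σ_k k a_k u^k`, equivalently
`1/N(u) ≥ e^{-u N'(u)/N(u)}` for `N = e^F`.  In terms of the mean photon
number `n̄(u) = u F'(u)`, the vacuum overlap `e^{-F(u)}` of the nonlinear
coherent state is at least `e^{-n̄}`: no nonlinear coherent state with
`N ∈ Σ₊` beats the Glauber–Sudarshan Helstrom bound. -/
theorem deformed_exponential_overlap_ge_GS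
    (R : ℝ) (hR : 0 < R) (a : ℕ → ℝ)
    (ha0 : a 0 = 0) (ha1 : 0 < a 1) (hak : ∀ k, 2 ≤ k → 0 ≤ a k)
    (haconv : ∀ u ∈ Set.Ico (0:ℝ) R, Summable (fun k : ℕ => a k * u ^ k)) :
    ∀ u ∈ Set.Ioo (0:ℝ) R,
      (∑' k : ℕ, a k * u ^ k) ≤ (∑' k : ℕ, (k : ℝ) * a k * u ^ k) ∧
      Real.exp (-(∑' k : ℕ, (k : ℝ) * a k * u ^ k)) ≤
        (Real.exp (∑' k : ℕ, a k * u ^ k))⁻¹ := by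
  intro u hu
  obtain ⟨hu0, huR⟩ := hu
  set v : ℝ := (u + R) / 2 with hv
  have hv0 : 0 < v := by simp only [hv]; linarith
  have huv : u < v := by simp only [hv]; linarith
  have hvR : v < R := by simp only [hv]; linarith
  have hanneg : ∀ k, 0 ≤ a k := by
    intro k
    match k with
    | 0 => simp [ha0]
    | 1 => exact ha1.le
    | (n+2) => exact hak _ (by omega)
  have hsv : Summable (fun k => a k * v ^ k) := haconv v ⟨hv0.le, hvR⟩
  have hsu : Summable (fun k => a k * u ^ k) := haconv u ⟨hu0.le, huR⟩
  have hr : ‖u / v‖ < 1 := by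
    rw [Real.norm_eq_abs, abs_of_pos (by positivity)]
    rw [div_lt_one hv0]; exact huv
  have hks : Summable (fun k : ℕ => (k : ℝ) * (u / v) ^ k) := by
    simpa using summable_pow_mul_geometric_of_norm_lt_one 1 hr
  have hksnn : ∀ k : ℕ, 0 ≤ (k : ℝ) * (u / v) ^ k := by
    intro k; positivity
  set C : ℝ := ∑' k : ℕ, (k : ℝ) * (u / v) ^ k with hC
  have hCle : ∀ k : ℕ, (k : ℝ) * (u / v) ^ k ≤ C :=
    fun k => Summable.le_tsum hks k (fun j _ => hksnn j)
  have hterm : ∀ k : ℕ, (k : ℝ) * a k * u ^ k ≤ C * (a k * v ^ k) := by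
    intro k
    have hu_eq : u ^ k = (u / v) ^ k * v ^ k := by
      rw [div_pow]; field_simp
    calc (k : ℝ) * a k * u ^ k = ((k : ℝ) * (u / v) ^ k) * (a k * v ^ k) := by
          rw [hu_eq]; ring
      _ ≤ C * (a k * v ^ k) := by
          apply mul_le_mul_of_nonneg_right (hCle k)
          have := hanneg k; positivity
  have hsku : Summable (fun k : ℕ => (k : ℝ) * a k * u ^ k) := by
    apply Summable.of_nonneg_of_le (fun k => by have := hanneg k; positivity) hterm
    exact hsv.mul_left C
  have hmain : (∑' k : ℕ, a k * u ^ k) ≤ (∑' k : ℕ, (k : ℝ) * a k * u ^ k) := by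
    apply Summable.tsum_le_tsum _ hsu hsku
    intro k
    match k with
    | 0 => simp [ha0]
    | (n+1) =>
      have h1 : (1 : ℝ) ≤ ((n + 1 : ℕ) : ℝ) := by exact_mod_cast Nat.one_le_iff_ne_zero.2 (Nat.succ_ne_zero n)
      have h2 : 0 ≤ a (n+1) * u ^ (n+1) := by have := hanneg (n+1); positivity
      nlinarith
  refine ⟨hmain, ?_⟩
  rw [← Real.exp_neg]
  exact Real.exp_le_exp.2 (neg_le_neg hmain)
end

section
/- Let f be a formal power series over ℝ with zero constant term, all coefficients nonnegative, and first coefficient a₁ > 0, and let g = exp(f). Then for every n ≥ 1 the coefficients b_n of g satisfy n·b_n ≥ a₁·b_{n-1} and b_n > 0. Consequently the associated sequence x_n := b_{n-1}/b_n satisfies 0 ≤ x_n ≤ n·x_1 for all n ≥ 1, where x_1 = b_0/b_1 = 1/a₁. -/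
/-!
Comparing coefficients in `g' = f' g` gives
`(n + 1) b_{n+1} = ∑_{i+j=n} (i + 1) a_{i+1} b_j`, a sum of nonnegative terms (once the
`b_j` with `j ≤ n` are known to be nonnegative) whose `i = 0` term is `a₁ b_n`. Strong
induction then gives `b_n > 0` together with `a₁ b_n ≤ (n + 1) b_{n+1}`, and the bounds on
`x_n` are this inequality divided by `b_n b_{n+1}`, using `b_1 = a₁ b_0 = a₁`.
-/

open PowerSeries Finset

namespace PowerSeries

variable {R : Type*}

theorem succ_mul_coeff_succ_eq_sum_of_derivative_eq [CommSemiring R] {f g : R⟦X⟧}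
    (hfg : derivative R g = derivative R f * g) (n : ℕ) :
    ((n : R) + 1) * coeff (n + 1) g =
      ∑ p ∈ antidiagonal n, ((p.1 : R) + 1) * coeff (p.1 + 1) f * coeff p.2 g := by
  rw [mul_comm, ← coeff_derivative, hfg, coeff_mul]
  refine Finset.sum_congr rfl fun p _ => ?_
  rw [coeff_derivative, mul_comm (coeff (p.1 + 1) f)]

theorem coeff_one_mul_coeff_le_succ_mul_coeff_succ
    [CommSemiring R] [PartialOrder R] [IsOrderedRing R] {f g : R⟦X⟧}
    (hfg : derivative R g = derivative R f * g) (hf : ∀ k, 0 ≤ coeff k f) {n : ℕ}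
    (hg : ∀ j ≤ n, 0 ≤ coeff j g) :
    coeff 1 f * coeff n g ≤ ((n : R) + 1) * coeff (n + 1) g := by
  rw [succ_mul_coeff_succ_eq_sum_of_derivative_eq hfg]
  have hterm := Finset.single_le_sum
    (f := fun p : ℕ × ℕ => ((p.1 : R) + 1) * coeff (p.1 + 1) f * coeff p.2 g)
    (fun p hp => mul_nonneg (mul_nonneg (add_nonneg p.1.cast_nonneg zero_le_one) (hf _))
      (hg _ (HasAntidiagonal.antidiagonal.snd_le hp)))
    (show (0, n) ∈ antidiagonal n by simp)
  simpa using hterm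

theorem coeff_pos_of_derivative_eq
    [CommSemiring R] [LinearOrder R] [IsStrictOrderedRing R] {f g : R⟦X⟧}
    (hfg : derivative R g = derivative R f * g) (hf : ∀ k, 0 ≤ coeff k f)
    (hf1 : 0 < coeff 1 f) (hg0 : 0 < coeff 0 g) (n : ℕ) : 0 < coeff n g := by
  induction n using Nat.strong_induction_on with
  | _ n ih =>
    rcases n with _ | m
    · exact hg0
    · have hle := coeff_one_mul_coeff_le_succ_mul_coeff_succ hfg hf
        (n := m) fun j hj => (ih j (Nat.lt_succ_of_le hj)).le
      exact pos_of_mul_pos_right ((mul_pos hf1 (ih m m.lt_succ_self)).trans_le hle)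
        (by positivity)

end PowerSeries

theorem cst_sequence_bounds_general (f g : PowerSeries ℝ)
    (hfnonneg : ∀ k, 0 ≤ PowerSeries.coeff k f)
    (hf1 : 0 < PowerSeries.coeff 1 f)
    (hg0 : PowerSeries.constantCoeff g = 1)
    (hgexp : PowerSeries.derivative ℝ g = PowerSeries.derivative ℝ f * g) :
    ∀ n : ℕ, 1 ≤ n →
      PowerSeries.coeff 1 f * PowerSeries.coeff (n - 1) g ≤
        (n : ℝ) * PowerSeries.coeff n g ∧
      0 < PowerSeries.coeff n g ∧
      0 ≤ PowerSeries.coeff (n - 1) g / PowerSeries.coeff n g ∧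
      PowerSeries.coeff (n - 1) g / PowerSeries.coeff n g ≤
        (n : ℝ) * (PowerSeries.coeff 0 g / PowerSeries.coeff 1 g) ∧
      PowerSeries.coeff 0 g / PowerSeries.coeff 1 g =
        1 / PowerSeries.coeff 1 f := by
  have hb0 : coeff 0 g = 1 := by rw [coeff_zero_eq_constantCoeff_apply, hg0]
  have hpos := coeff_pos_of_derivative_eq hgexp hfnonneg hf1 (hb0 ▸ one_pos)
  have hb1 : coeff 1 g = coeff 1 f := by
    simpa [hb0] using succ_mul_coeff_succ_eq_sum_of_derivative_eq hgexp 0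
  intro n hn
  obtain ⟨m, rfl⟩ : ∃ m, n = m + 1 := ⟨n - 1, by omega⟩
  have hineq : coeff 1 f * coeff m g ≤ ((m + 1 : ℕ) : ℝ) * coeff (m + 1) g := by
    exact_mod_cast coeff_one_mul_coeff_le_succ_mul_coeff_succ hgexp hfnonneg
      fun j _ => (hpos j).le
  rw [Nat.add_sub_cancel]
  refine ⟨hineq, hpos _, div_nonneg (hpos _).le (hpos _).le, ?_, by rw [hb0, hb1]⟩
  rw [hb0, hb1, ← mul_div_assoc, mul_one, div_le_div_iff₀ (hpos _) hf1, mul_comm]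
  exact hineq

/-- Let `f` be a formal power series over `ℝ` with zero constant term,
nonnegative coefficients and first coefficient `a₁ > 0`, and let
`g = exp f`, characterized by `g' = f' · g` and constant term `1`.
Then for every `n ≥ 1` the coefficients `b_n` of `g` satisfy
`a₁ b_{n-1} ≤ n b_n` and `b_n > 0`; consequently the CST sequence
`x_n = b_{n-1}/b_n` satisfies `0 ≤ x_n ≤ n x_1` with `x_1 = b_0/b_1 = 1/a₁`. -/
theorem cst_sequence_bounds (f g : PowerSeries ℝ)
    (hf0 : PowerSeries.constantCoeff f = 0)
    (hfnonneg : ∀ k, 0 ≤ PowerSeries.coeff k f)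
    (hf1 : 0 < PowerSeries.coeff 1 f)
    (hg0 : PowerSeries.constantCoeff g = 1)
    (hgexp : PowerSeries.derivative ℝ g = PowerSeries.derivative ℝ f * g) :
    ∀ n : ℕ, 1 ≤ n →
      PowerSeries.coeff 1 f * PowerSeries.coeff (n - 1) g ≤
        (n : ℝ) * PowerSeries.coeff n g ∧
      0 < PowerSeries.coeff n g ∧
      0 ≤ PowerSeries.coeff (n - 1) g / PowerSeries.coeff n g ∧
      PowerSeries.coeff (n - 1) g / PowerSeries.coeff n g ≤
        (n : ℝ) * (PowerSeries.coeff 0 g / PowerSeries.coeff 1 g) ∧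
      PowerSeries.coeff 0 g / PowerSeries.coeff 1 g =
        1 / PowerSeries.coeff 1 f :=
  cst_sequence_bounds_general f g hfnonneg hf1 hg0 hgexp
end

section
/- For every a > 0 and every t > 0, exp(1/(4a) − t/2 − √(1+4at)/(4a)) > e^{-t}. Hence for the nonlinear coherent states generated by N(u) = exp(u + a u²/2), whose mean photon number is n̄(u) = u(1+au) with inverse u(n̄) = (√(1+4a n̄) − 1)/(2a), the difference Δ(n̄) = 1/N(u(n̄)) − e^{-n̄} is strictly positive for all n̄ > 0, i.e. their Helstrom bound is strictly larger than the Glauber–Sudarshan one. -/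
/-!
With `s = √(1 + 4at)`, the exponent exceeds `-t` by `(1 + 2at - s)/(4a)`, which is positive
because `(1 + 2at)² = s² + 4a²t²`. For the second claim, `u = (s - 1)/(2a)` is the positive root
of `a u² + u - t = 0`, and using `s² = 1 + 4at` the exponent `u + a u²/2` of `N(u)` is exactly the
negative of the exponent in the first claim.
-/

lemma sqrt_one_add_two_mul_lt_one_add {x : ℝ} (hx : x ≠ 0) (hx' : -1 < x) :
    √(1 + 2 * x) < 1 + x := by
  rw [Real.sqrt_lt' (by linarith)]
  nlinarith [sq_pos_of_ne_zero hx]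

lemma neg_lt_hermite_vacuum_exponent {a t : ℝ} (ha : 0 < a) (ht : 0 < t) :
    -t < 1 / (4 * a) - t / 2 - √(1 + 4 * a * t) / (4 * a) := by
  have hsqrt : √(1 + 4 * a * t) < 1 + 2 * a * t := by
    have h := sqrt_one_add_two_mul_lt_one_add (x := 2 * a * t) (by positivity) (by nlinarith)
    rwa [show 2 * (2 * a * t) = 4 * a * t by ring] at h
  have hgap : (1 / (4 * a) - t / 2 - √(1 + 4 * a * t) / (4 * a)) - -t
      = (1 + 2 * a * t - √(1 + 4 * a * t)) / (4 * a) := by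
    field_simp
    ring
  have : 0 < (1 + 2 * a * t - √(1 + 4 * a * t)) / (4 * a) := by
    apply div_pos <;> linarith
  linarith

lemma hermite_log_norm_at_root {a t s : ℝ} (ha : a ≠ 0) (hs : s ^ 2 = 1 + 4 * a * t) :
    (s - 1) / (2 * a) + a * ((s - 1) / (2 * a)) ^ 2 / 2
      = -(1 / (4 * a) - t / 2 - s / (4 * a)) := by
  field_simp
  linear_combination 4 * hs

/-- For every `a > 0` and `t > 0`,
`exp (1/(4a) − t/2 − √(1+4at)/(4a)) > e^{-t}`.  Hence for the nonlinear
coherent states generated by `N(u) = exp (u + a u²/2)`, with mean photon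
number `n̄(u) = u(1+au)` inverted by `u(n̄) = (√(1+4a n̄) − 1)/(2a)`, the
difference `Δ(n̄) = 1/N(u(n̄)) − e^{-n̄}` is strictly positive for `n̄ = t > 0`:
their Helstrom bound strictly exceeds the Glauber–Sudarshan one. -/
theorem hermiteCS_delta_pos (a t : ℝ) (ha : 0 < a) (ht : 0 < t) :
    Real.exp (-t) <
      Real.exp (1 / (4*a) - t / 2 - Real.sqrt (1 + 4*a*t) / (4*a)) ∧
    0 < (Real.exp ((Real.sqrt (1 + 4*a*t) - 1) / (2*a) +
          a * ((Real.sqrt (1 + 4*a*t) - 1) / (2*a)) ^ 2 / 2))⁻¹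
        - Real.exp (-t) := by
  have hexp := Real.exp_lt_exp.mpr (neg_lt_hermite_vacuum_exponent ha ht)
  refine ⟨hexp, ?_⟩
  have hsq : √(1 + 4 * a * t) ^ 2 = 1 + 4 * a * t := Real.sq_sqrt (by positivity)
  rw [hermite_log_norm_at_root ha.ne' hsq, Real.exp_neg, inv_inv, sub_pos]
  exact hexp
end

section
/- (Abel–Hurwitz normalization of the modified Abel distribution.) For every β > 0, every η ∈ (0,1), and every natural number n: Σ_{k=0}^n binom(n,k) η(1-η) (η + k/β)^{k-1} (1-η + (n-k)/β)^{n-k-1} = (1 + n/β)^{n-1}. Hence 𝔭_k^{(n)}(η) = binom(n,k) η(1-η)(η + k/β)^{k-1}(1-η+(n-k)/β)^{n-k-1} / (1+n/β)^{n-1} is a probability distribution on {0,…,n}. -/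
/-!
Scaling by `β` turns each factor `c (c + k/β)^{k-1}` into `β^{-k} A_k(βc)`, where
`A_k(x) = x (x + k)^{k-1}` is the Abel polynomial, so the normalization is Abel's binomial
identity `∑ C(n,k) A_k(x) A_{n-k}(y) = A_n(x + y)` at `x = βη`, `y = β(1-η)`. That identity holds
because both sides agree at `x = 0` (only the `k = 0` term survives since `A_k(0) = 0` for
`k ≥ 1`) and have the same `x`-derivative, by induction on `n` and `A_{n+1}' = (n+1) A_n(· + 1)`.
-/

open Finset

noncomputable def abelPoly : ℕ → ℝ → ℝ
  | 0, _ => 1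
  | n + 1, x => x * (x + (n + 1)) ^ n

@[simp]
lemma abelPoly_zero (x : ℝ) : abelPoly 0 x = 1 := rfl

lemma abelPoly_succ (n : ℕ) (x : ℝ) : abelPoly (n + 1) x = x * (x + (n + 1)) ^ n := rfl

@[simp]
lemma abelPoly_succ_apply_zero (n : ℕ) : abelPoly (n + 1) 0 = 0 := by
  simp [abelPoly_succ]

lemma hasDerivAt_abelPoly_succ (n : ℕ) (x : ℝ) :
    HasDerivAt (abelPoly (n + 1)) ((n + 1) * abelPoly n (x + 1)) x := by
  rw [show abelPoly (n + 1) = fun y : ℝ => y * (y + (n + 1)) ^ n from funext (abelPoly_succ n)]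
  refine ((hasDerivAt_id' x).fun_mul
    (((hasDerivAt_id' x).add_const ((n : ℝ) + 1)).fun_pow n)).congr_deriv ?_
  cases n with
  | zero => simp
  | succ m =>
    simp only [abelPoly_succ, Nat.cast_add, Nat.cast_one, add_tsub_cancel_right, pow_succ]
    ring

lemma hasDerivAt_sum_choose_mul_abelPoly (n : ℕ) (x y : ℝ) :
    HasDerivAt
      (fun x => ∑ k ∈ range (n + 2), ((n + 1).choose k : ℝ) * abelPoly k x * abelPoly (n + 1 - k) y)
      ((n + 1) * ∑ k ∈ range (n + 1), (n.choose k : ℝ) * abelPoly k (x + 1) * abelPoly (n - k) y)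
      x := by
  have hsplit : (fun x => ∑ k ∈ range (n + 2),
        ((n + 1).choose k : ℝ) * abelPoly k x * abelPoly (n + 1 - k) y) =
      fun x => ∑ k ∈ range (n + 1),
        ((n + 1).choose (k + 1) : ℝ) * abelPoly (k + 1) x * abelPoly (n - k) y +
          abelPoly (n + 1) y := by
    funext x
    simp [sum_range_succ' _ (n + 1)]
  rw [hsplit, mul_sum]
  refine ((HasDerivAt.fun_sum fun k _ => ((hasDerivAt_abelPoly_succ k x).const_mul
    ((n + 1).choose (k + 1) : ℝ)).mul_const (abelPoly (n - k) y)).add_const _).congr_deriv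
    (sum_congr rfl fun k _ => ?_)
  have hchoose :
      ((n + 1).choose (k + 1) : ℝ) * ((k + 1 : ℕ) : ℝ) = ((n + 1 : ℕ) : ℝ) * n.choose k := by
    exact_mod_cast (Nat.add_one_mul_choose_eq n k).symm
  push_cast at hchoose
  linear_combination abelPoly k (x + 1) * abelPoly (n - k) y * hchoose

lemma sum_choose_mul_abelPoly_apply_zero (n : ℕ) (y : ℝ) :
    ∑ k ∈ range (n + 1), (n.choose k : ℝ) * abelPoly k 0 * abelPoly (n - k) y = abelPoly n y := by
  rw [sum_range_succ']
  simp

theorem sum_choose_mul_abelPoly (n : ℕ) (x y : ℝ) :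
    ∑ k ∈ range (n + 1), (n.choose k : ℝ) * abelPoly k x * abelPoly (n - k) y =
      abelPoly n (x + y) := by
  induction n generalizing x with
  | zero => simp
  | succ n ih =>
    set F : ℝ → ℝ := fun x => (∑ k ∈ range (n + 2),
      ((n + 1).choose k : ℝ) * abelPoly k x * abelPoly (n + 1 - k) y) - abelPoly (n + 1) (x + y)
    have hF : ∀ x, HasDerivAt F 0 x := fun x => by
      have hshift := (hasDerivAt_abelPoly_succ n (x + y)).comp_add_const x y
      have h := (hasDerivAt_sum_choose_mul_abelPoly n x y).sub hshift
      rwa [ih, add_right_comm, sub_self] at h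
    have hF0 : F 0 = 0 := by
      simp only [F, zero_add, sum_choose_mul_abelPoly_apply_zero, sub_self]
    have hconst : F x = F 0 := is_const_of_deriv_eq_zero (fun x => (hF x).differentiableAt)
      (fun x => (hF x).deriv) x 0
    exact sub_eq_zero.mp (hconst.trans hF0)

lemma abelPoly_mul_eq_pow_mul {β c : ℝ} (hβ : β ≠ 0) (hc : c ≠ 0) (k : ℕ) :
    abelPoly k (β * c) = β ^ k * (c * (c + k / β) ^ ((k : ℤ) - 1)) := by
  cases k with
  | zero => simp [hc]
  | succ k =>
    have hbase : c + ((k + 1 : ℕ) : ℝ) / β = (β * c + (k + 1)) / β := by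
      push_cast
      field_simp
    rw [abelPoly_succ, hbase, show ((k + 1 : ℕ) : ℤ) - 1 = k by push_cast; ring, zpow_natCast,
      div_pow]
    field_simp
    ring

theorem sum_choose_mul_add_div_zpow {β a b : ℝ} (hβ : β ≠ 0) (ha : a ≠ 0) (hb : b ≠ 0)
    (hab : a + b ≠ 0) (n : ℕ) :
    ∑ k ∈ range (n + 1), (n.choose k : ℝ) * (a * b) * (a + k / β) ^ ((k : ℤ) - 1) *
        (b + ((n - k : ℕ) : ℝ) / β) ^ (((n - k : ℕ) : ℤ) - 1) =
      (a + b) * (a + b + n / β) ^ ((n : ℤ) - 1) := by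
  refine mul_left_cancel₀ (pow_ne_zero n hβ) ?_
  rw [← abelPoly_mul_eq_pow_mul hβ hab, mul_add, ← sum_choose_mul_abelPoly, mul_sum]
  refine sum_congr rfl fun k hk => ?_
  rw [abelPoly_mul_eq_pow_mul hβ ha, abelPoly_mul_eq_pow_mul hβ hb,
    ← pow_mul_pow_sub β (Nat.lt_succ_iff.mp (mem_range.mp hk))]
  ring

/-- Abel–Hurwitz normalization of the modified Abel distribution: for every
`β > 0`, `η ∈ (0,1)` and `n : ℕ`,
`Σ_{k=0}^n C(n,k) η(1-η) (η+k/β)^{k-1} (1-η+(n-k)/β)^{n-k-1} = (1+n/β)^{n-1}`,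
so `𝔭_k^{(n)}(η) = C(n,k) η(1-η)(η+k/β)^{k-1}(1-η+(n-k)/β)^{n-k-1}/(1+n/β)^{n-1}`
is a probability distribution on `{0,…,n}`. -/
theorem modified_abel_normalization (β : ℝ) (hβ : 0 < β)
    (η : ℝ) (hη : η ∈ Set.Ioo (0:ℝ) 1) (n : ℕ) :
    (∑ k ∈ Finset.range (n + 1),
        (n.choose k : ℝ) * (η * (1 - η)) * (η + k / β) ^ ((k : ℤ) - 1) *
          ((1 - η) + ((n - k : ℕ) : ℝ) / β) ^ (((n - k : ℕ) : ℤ) - 1)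
      = (1 + n / β) ^ ((n : ℤ) - 1)) ∧
    (∀ k, k ≤ n →
      0 ≤ (n.choose k : ℝ) * (η * (1 - η)) * (η + k / β) ^ ((k : ℤ) - 1) *
            ((1 - η) + ((n - k : ℕ) : ℝ) / β) ^ (((n - k : ℕ) : ℤ) - 1) /
          (1 + n / β) ^ ((n : ℤ) - 1)) := by
  obtain ⟨hη₀, hη₁⟩ := hη
  have h1η : 0 < 1 - η := sub_pos.mpr hη₁
  have hsum := sum_choose_mul_add_div_zpow hβ.ne' hη₀.ne' h1η.ne' (by simp) n
  rw [add_sub_cancel, one_mul] at hsum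
  exact ⟨hsum, fun k _ => by positivity⟩
end

section
/- Let J_ν denote the Bessel function of the first kind, J_ν(z) = Σ_{m=0}^∞ (-1)^m (z/2)^{ν+2m}/(m! Γ(ν+m+1)). Then for every t > 0: Σ_{n=1}^∞ n (J_n(2t))² = 2t² (J_0(2t))² − t J_0(2t) J_1(2t) + 2t² (J_1(2t))². Equivalently, with u = t², the normalization function of the modified Susskind–Glogower coherent states satisfies N(u) = (1/u) Σ_{n≥1} n (J_n(2√u))² = 2(J_0(2√u))² − (1/√u) J_0(2√u) J_1(2√u) + 2(J_1(2√u))². -/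
/-!
Write `b_n = J_n(z)`. Termwise manipulation of the power series gives the three-term recurrence
`z (b_n + b_{n+2}) = 2(n+1) b_{n+1}`, and with it the quantity
`D_n = z²/2 (b_n² + b_{n+1}²) - z/2 (2n+1) b_n b_{n+1}` telescopes: `D_n - D_{n+1} = (n+1) b_{n+1}²`.
The bound `|b_n| ≤ |z/2|ⁿ/n! · exp (z²/4)` gives `b_n → 0`, the recurrence then gives `n b_n → 0`,
so `D_n → 0` and the series of nonnegative terms `n b_n²` sums to `D_0`.
-/

/-- The Bessel function of the first kind of natural order `n`,
`J_n(z) = Σ_{m≥0} (-1)^m (z/2)^{n+2m}/(m! Γ(n+m+1))`. -/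
noncomputable def besselJ (n : ℕ) (z : ℝ) : ℝ :=
  ∑' m : ℕ, (-1) ^ m * (z / 2) ^ (n + 2 * m) /
    (m.factorial * Real.Gamma ((n : ℝ) + m + 1))

open Filter Topology
open scoped Nat

noncomputable def besselTerm (n : ℕ) (x : ℝ) (m : ℕ) : ℝ :=
  (-1) ^ m * x ^ (n + 2 * m) / (m ! * (n + m)!)

lemma norm_besselTerm_le (n : ℕ) (x : ℝ) (m : ℕ) :
    ‖besselTerm n x m‖ ≤ |x| ^ n / n ! * ((x ^ 2) ^ m / m !) := by
  have hfac : (n ! : ℝ) ≤ (n + m)! := by exact_mod_cast Nat.factorial_le (n.le_add_right m)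
  simp only [besselTerm, norm_div, norm_mul, norm_pow, norm_neg, norm_one, one_pow, one_mul,
    Real.norm_eq_abs, Nat.abs_cast]
  rw [pow_add, pow_mul, sq_abs, div_mul_div_comm, mul_comm (n ! : ℝ)]
  gcongr

lemma summable_besselTerm (n : ℕ) (x : ℝ) : Summable (besselTerm n x) :=
  .of_norm_bounded ((Real.summable_pow_div_factorial (x ^ 2)).mul_left _) (norm_besselTerm_le n x)

lemma hasSum_besselJ (n : ℕ) (z : ℝ) : HasSum (besselTerm n (z / 2)) (besselJ n z) := by
  convert (summable_besselTerm n (z / 2)).hasSum using 1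
  refine tsum_congr fun m => ?_
  rw [besselTerm, show (n : ℝ) + m + 1 = (n + m : ℕ) + 1 by push_cast; ring,
    Real.Gamma_nat_eq_factorial]

lemma abs_besselJ_le (n : ℕ) (z : ℝ) :
    |besselJ n z| ≤ |z / 2| ^ n / n ! * Real.exp ((z / 2) ^ 2) := by
  have hexp := (NormedSpace.expSeries_div_hasSum_exp ((z / 2) ^ 2)).mul_left (|z / 2| ^ n / n !)
  rw [← Real.exp_eq_exp_ℝ] at hexp
  exact (hasSum_besselJ n z).norm_le_of_bounded hexp (norm_besselTerm_le n _)

lemma tendsto_besselJ_atTop (z : ℝ) : Tendsto (besselJ · z) atTop (𝓝 0) := by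
  have h := (FloorSemiring.tendsto_pow_div_factorial_atTop |z / 2|).mul_const
    (Real.exp ((z / 2) ^ 2))
  rw [zero_mul] at h
  exact squeeze_zero_norm (abs_besselJ_le · z) h

lemma besselTerm_recurrence (n : ℕ) (x : ℝ) (m : ℕ) :
    x * (besselTerm n x (m + 1) + besselTerm (n + 2) x m)
      = (n + 1) * besselTerm (n + 1) x (m + 1) := by
  simp only [besselTerm]
  rw [show n + (m + 1) = n + m + 1 by ring, show n + 2 + m = n + m + 1 + 1 by ring,
    show n + 1 + (m + 1) = n + m + 1 + 1 by ring, Nat.factorial_succ (n + m + 1),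
    Nat.factorial_succ (n + m), Nat.factorial_succ m]
  push_cast
  field_simp
  ring

lemma besselJ_recurrence (n : ℕ) (z : ℝ) :
    z * (besselJ n z + besselJ (n + 2) z) = 2 * (n + 1) * besselJ (n + 1) z := by
  have hhead : z / 2 * besselTerm n (z / 2) 0 = (n + 1) * besselTerm (n + 1) (z / 2) 0 := by
    simp only [besselTerm, mul_zero, add_zero, pow_zero, one_mul, Nat.factorial_zero,
      Nat.cast_one, Nat.factorial_succ n]
    push_cast
    field_simp
    ring
  have htail : z / 2 * (besselJ n z - besselTerm n (z / 2) 0 + besselJ (n + 2) z)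
      = (n + 1) * (besselJ (n + 1) z - besselTerm (n + 1) (z / 2) 0) := by
    have hlhs := (((hasSum_nat_add_iff' 1).mpr (hasSum_besselJ n z)).add
      (hasSum_besselJ (n + 2) z)).mul_left (z / 2)
    have hrhs := ((hasSum_nat_add_iff' 1).mpr (hasSum_besselJ (n + 1) z)).mul_left ((n : ℝ) + 1)
    simp only [besselTerm_recurrence, Finset.sum_range_one] at hlhs hrhs
    exact hlhs.unique hrhs
  linear_combination 2 * htail + 2 * hhead

lemma tendsto_nat_mul_besselJ_atTop (z : ℝ) :
    Tendsto (fun n : ℕ => n * besselJ n z) atTop (𝓝 0) := by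
  rw [← tendsto_add_atTop_iff_nat 1]
  have hJ := tendsto_besselJ_atTop z
  have h := (hJ.add ((tendsto_add_atTop_iff_nat 2).mpr hJ)).const_mul (z / 2)
  rw [add_zero, mul_zero] at h
  refine h.congr fun n => ?_
  push_cast
  linear_combination besselJ_recurrence n z / 2

lemma hasSum_of_sub_succ_of_nonneg {f D : ℕ → ℝ} (hf : ∀ n, 0 ≤ f n)
    (hD : ∀ n, D n - D (n + 1) = f n) (hlim : Tendsto D atTop (𝓝 0)) : HasSum f (D 0) := by
  rw [hasSum_iff_tendsto_nat_of_nonneg hf]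
  simp_rw [← hD, Finset.sum_range_sub']
  simpa using tendsto_const_nhds.sub hlim

/-- The tail `∑_{k > n} k J_k(z)²` in closed form. -/
noncomputable def besselTail (z : ℝ) (n : ℕ) : ℝ :=
  z ^ 2 / 2 * (besselJ n z ^ 2 + besselJ (n + 1) z ^ 2)
    - z / 2 * (2 * n + 1) * besselJ n z * besselJ (n + 1) z

lemma besselTail_sub_succ (z : ℝ) (n : ℕ) :
    besselTail z n - besselTail z (n + 1) = (n + 1 : ℕ) * besselJ (n + 1) z ^ 2 := by
  simp only [besselTail]
  push_cast
  linear_combination (z * besselJ n z - z * besselJ (n + 2) z + besselJ (n + 1) z) / 2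
    * besselJ_recurrence n z

lemma tendsto_besselTail_atTop (z : ℝ) : Tendsto (besselTail z) atTop (𝓝 0) := by
  have hJ := tendsto_besselJ_atTop z
  have hJ1 := (tendsto_add_atTop_iff_nat 1).mpr hJ
  have hnJ := tendsto_nat_mul_besselJ_atTop z
  have h := (((hJ.pow 2).add (hJ1.pow 2)).const_mul (z ^ 2 / 2)).sub
    ((((hnJ.const_mul 2).mul hJ1).add (hJ.mul hJ1)).const_mul (z / 2))
  simp only [zero_pow two_ne_zero, add_zero, mul_zero, sub_zero] at h
  refine h.congr fun n => ?_
  simp only [besselTail]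
  ring

lemma hasSum_nat_mul_besselJ_sq (z : ℝ) :
    HasSum (fun n : ℕ => n * besselJ n z ^ 2) (besselTail z 0) := by
  rw [← hasSum_nat_add_iff' 1]
  simpa using hasSum_of_sub_succ_of_nonneg (fun n => by positivity) (besselTail_sub_succ z)
    (tendsto_besselTail_atTop z)

theorem modified_susskind_glogower_normalization_general (t : ℝ) :
    ∑' n : ℕ, (n : ℝ) * (besselJ n (2 * t)) ^ 2
      = 2 * t ^ 2 * (besselJ 0 (2 * t)) ^ 2
        - t * besselJ 0 (2 * t) * besselJ 1 (2 * t)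
        + 2 * t ^ 2 * (besselJ 1 (2 * t)) ^ 2 := by
  rw [(hasSum_nat_mul_besselJ_sq (2 * t)).tsum_eq, besselTail]
  ring

/-- For every `t > 0`,
`Σ_{n≥1} n (J_n(2t))² = 2t²(J₀(2t))² − t J₀(2t)J₁(2t) + 2t²(J₁(2t))²`
(the `n = 0` term of the sum below vanishes).  With `u = t²` this is the
closed form of the normalization function `N(u)` of the modified
Susskind–Glogower coherent states. -/
theorem modified_susskind_glogower_normalization (t : ℝ) (ht : 0 < t) :
    ∑' n : ℕ, (n : ℝ) * (besselJ n (2 * t)) ^ 2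
      = 2 * t ^ 2 * (besselJ 0 (2 * t)) ^ 2
        - t * besselJ 0 (2 * t) * besselJ 1 (2 * t)
        + 2 * t ^ 2 * (besselJ 1 (2 * t)) ^ 2 :=
  modified_susskind_glogower_normalization_general t
end

section
/- Let (x_n)_{n≥0} be a sequence with x_0 = 0 and x_n > 0 for n ≥ 1, set x_n! = x_1⋯x_n (x_0! = 1), and suppose N(u) = Σ_{n} u^n/x_n! converges for 0 ≤ u < R². Fix η ∈ (0,1) and let (p_s(η))_{s≥0} be real numbers such that Σ_{s=0}^∞ p_s(η) u^s/x_s! = N(u)/N(ηu) for all u ∈ [0,R²), the series converging absolutely. Then for every n ∈ ℕ and u ∈ (0,R²): Σ_{m=n}^∞ [x_m!/(x_{m-n}! x_n!)] η^n p_{m-n}(η) · u^m/(N(u) x_m!) = (ηu)^n/(N(ηu) x_n!). That is, the deformed Bernoulli transform of the deformed Poisson distribution with parameter u is the deformed Poisson distribution with parameter ηu. -/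
/-!
Each term of the transformed distribution factors as
`η^n u^n / (N(u) x_n!) · p_s u^s / x_s!`, since the deformed binomial coefficient cancels the
`x_{n+s}!` of the Poisson weight. Summing over `s`, the generating function of the `p_s`
contributes `N(u) / N(ηu)`, and the factor `N(u)` cancels.
-/

noncomputable def deformedExp (xf : ℕ → ℝ) (u : ℝ) : ℝ := ∑' k, u ^ k / xf k

noncomputable def deformedPoisson (xf : ℕ → ℝ) (u : ℝ) (m : ℕ) : ℝ :=
  u ^ m / (deformedExp xf u * xf m)

section DeformedFactorial

variable {x xf : ℕ → ℝ}

theorem pos_of_factorial_recursion (hx : ∀ n, 1 ≤ n → 0 < x n) (hxf0 : xf 0 = 1)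
    (hxf : ∀ n, xf (n + 1) = xf n * x (n + 1)) (n : ℕ) : 0 < xf n := by
  induction n with
  | zero => simp [hxf0]
  | succ k ih => rw [hxf]; exact mul_pos ih (hx (k + 1) (Nat.le_add_left 1 k))

theorem one_le_deformedExp (hxf0 : xf 0 = 1) (hpos : ∀ n, 0 < xf n) {u : ℝ} (hu : 0 ≤ u)
    (hs : Summable fun n => u ^ n / xf n) : 1 ≤ deformedExp xf u := by
  rw [deformedExp]
  simpa [hxf0] using hs.le_tsum 0 fun m _ => div_nonneg (pow_nonneg hu m) (hpos m).le

end DeformedFactorial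

theorem deformedBinomial_mul_deformedPoisson {xf : ℕ → ℝ} {n s : ℕ} (hxf : xf (n + s) ≠ 0)
    (η p u : ℝ) :
    xf (n + s) / (xf s * xf n) * η ^ n * p * deformedPoisson xf u (n + s)
      = η ^ n * u ^ n / (deformedExp xf u * xf n) * (p * u ^ s / xf s) := by
  rw [deformedPoisson, pow_add]
  field_simp

theorem tsum_deformedBinomial_mul_deformedPoisson {xf p : ℕ → ℝ} {η u : ℝ}
    (hxf : ∀ m, xf m ≠ 0) (hN : deformedExp xf u ≠ 0)
    (hgen : ∑' s, p s * u ^ s / xf s = deformedExp xf u / deformedExp xf (η * u)) (n : ℕ) :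
    ∑' s, xf (n + s) / (xf s * xf n) * η ^ n * p s * deformedPoisson xf u (n + s)
      = deformedPoisson xf (η * u) n := by
  simp_rw [deformedBinomial_mul_deformedPoisson (hxf _), tsum_mul_left, hgen, deformedPoisson,
    mul_pow]
  field_simp

theorem deformed_bernoulli_transform_general
    (R2 : ℝ)
    (x : ℕ → ℝ) (hx : ∀ n, 1 ≤ n → 0 < x n)
    (xf : ℕ → ℝ) (hxf0 : xf 0 = 1) (hxf : ∀ n, xf (n + 1) = xf n * x (n + 1))
    (hconv : ∀ u ∈ Set.Ico (0:ℝ) R2, Summable (fun n : ℕ => u ^ n / xf n))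
    (η : ℝ)
    (p : ℕ → ℝ)
    (hgen : ∀ u ∈ Set.Ico (0:ℝ) R2,
      ∑' s : ℕ, p s * u ^ s / xf s
        = (∑' n : ℕ, u ^ n / xf n) / (∑' n : ℕ, (η * u) ^ n / xf n)) :
    ∀ n : ℕ, ∀ u ∈ Set.Ioo (0:ℝ) R2,
      ∑' s : ℕ, (xf (n + s) / (xf s * xf n)) * η ^ n * p s *
          (u ^ (n + s) / ((∑' k : ℕ, u ^ k / xf k) * xf (n + s)))
        = (η * u) ^ n / ((∑' k : ℕ, (η * u) ^ k / xf k) * xf n) := by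
  intro n u hu
  have huIco : u ∈ Set.Ico (0:ℝ) R2 := Set.Ioo_subset_Ico_self hu
  have hpos := pos_of_factorial_recursion hx hxf0 hxf
  have hN : deformedExp xf u ≠ 0 :=
    (zero_lt_one.trans_le (one_le_deformedExp hxf0 hpos hu.1.le (hconv u huIco))).ne'
  exact tsum_deformedBinomial_mul_deformedPoisson (fun m => (hpos m).ne') hN (hgen u huIco) n

/-- Deformed Bernoulli transform of the deformed Poisson distribution.
Let `x_0 = 0`, `x_n > 0` for `n ≥ 1`, `x_n! = x_1 ⋯ x_n` (encoded by `xf`),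
and suppose `N(u) = Σ_n u^n/x_n!` converges on `[0,R²)`.  Fix `η ∈ (0,1)`
and polynomials values `p_s = p_s(η)` generated by
`Σ_s p_s u^s/x_s! = N(u)/N(ηu)` (absolutely convergent on `[0,R²)`).
Then for every `n` and `u ∈ (0,R²)`,
`Σ_{m≥n} [x_m!/(x_{m-n}! x_n!)] η^n p_{m-n} · u^m/(N(u) x_m!)
  = (ηu)^n/(N(ηu) x_n!)`
(here the sum is written with `m = n + s`): imperfect detection amounts
to rescaling `α → √η α`. -/
theorem deformed_bernoulli_transform
    (R2 : ℝ) (hR2 : 0 < R2)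
    (x : ℕ → ℝ) (hx0 : x 0 = 0) (hx : ∀ n, 1 ≤ n → 0 < x n)
    (xf : ℕ → ℝ) (hxf0 : xf 0 = 1) (hxf : ∀ n, xf (n + 1) = xf n * x (n + 1))
    (hconv : ∀ u ∈ Set.Ico (0:ℝ) R2, Summable (fun n : ℕ => u ^ n / xf n))
    (η : ℝ) (hη : η ∈ Set.Ioo (0:ℝ) 1)
    (p : ℕ → ℝ)
    (hpconv : ∀ u ∈ Set.Ico (0:ℝ) R2, Summable (fun s : ℕ => p s * u ^ s / xf s))
    (hgen : ∀ u ∈ Set.Ico (0:ℝ) R2,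
      ∑' s : ℕ, p s * u ^ s / xf s
        = (∑' n : ℕ, u ^ n / xf n) / (∑' n : ℕ, (η * u) ^ n / xf n)) :
    ∀ n : ℕ, ∀ u ∈ Set.Ioo (0:ℝ) R2,
      ∑' s : ℕ, (xf (n + s) / (xf s * xf n)) * η ^ n * p s *
          (u ^ (n + s) / ((∑' k : ℕ, u ^ k / xf k) * xf (n + s)))
        = (η * u) ^ n / ((∑' k : ℕ, (η * u) ^ k / xf k) * xf n) :=
  deformed_bernoulli_transform_general R2 x hx xf hxf0 hxf hconv η p hgen
end
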